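/- Let (T,r) be a rooted tree of type A. Then (CT,s) is a rooted tree of type A with m(CT) = 8 m(T) + 3 m_0(T) and m_0(CT) = 5 m(T) + 3 m_0(T). Consequently, for every k ≥ 0: m(C^k L) = G_{k+1}, m_0(C^k L) = G_{k+1} − 3 G_k, m(C^k F) = 3 G_{k+1} − 3 G_k, and m_0(C^k F) = 2 G_{k+1} − G_k, where (G_j) is defined by G_0 = 0, G_1 = 1 and G_{j+1} = 11 G_j − 9 G_{j−1}. -/

import Mathlib

namespace PaperMM

open SimpleGraph

/-- `M` is a matching of `G`: a set of edges of `G` that are pairwise disjoint. -/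
def IsMatchingSet {V : Type} (G : SimpleGraph V) (M : Set (Sym2 V)) : Prop :=
  M ⊆ G.edgeSet ∧ M.Pairwise fun e f => ∀ v : V, ¬(v ∈ e ∧ v ∈ f)

/-- The matching number `μ(G)`: the maximum cardinality of a matching of `G`. -/
noncomputable def matchNum {V : Type} (G : SimpleGraph V) : ℕ :=
  sSup {n | ∃ M : Set (Sym2 V), IsMatchingSet G M ∧ M.ncard = n}

/-- The set of maximum matchings of `G`. -/
def MaximumMatchings {V : Type} (G : SimpleGraph V) : Set (Set (Sym2 V)) :=
  {M | IsMatchingSet G M ∧ M.ncard = matchNum G}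

/-- `m(G)`: the number of maximum matchings of `G`. -/
noncomputable def mm {V : Type} (G : SimpleGraph V) : ℕ := (MaximumMatchings G).ncard

/-- The matching `M` covers the vertex `v`. -/
def Covers {V : Type} (M : Set (Sym2 V)) (v : V) : Prop := ∃ e ∈ M, v ∈ e

/-- `v` is of type A in `G`: some maximum matching of `G` does not cover `v`. -/
def TypeA {V : Type} (G : SimpleGraph V) (v : V) : Prop :=
  ∃ M ∈ MaximumMatchings G, ¬ Covers M v

/-- `v` is of type B in `G`: every maximum matching of `G` covers `v`. -/
def TypeB {V : Type} (G : SimpleGraph V) (v : V) : Prop := ¬ TypeA G v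

/-- `G` has a perfect matching. -/
def HasPerfectMatching {V : Type} (G : SimpleGraph V) : Prop :=
  ∃ M : Set (Sym2 V), IsMatchingSet G M ∧ ∀ v, Covers M v

/-- The degree of `v` in `G`. -/
noncomputable def degS {V : Type} (G : SimpleGraph V) (v : V) : ℕ := (G.neighborSet v).ncard

/-- `G` is an optimal tree: a tree maximising `m` among all trees of the same order. -/
def OptimalTree {V : Type} [Fintype V] (G : SimpleGraph V) : Prop :=
  G.IsTree ∧ ∀ H : SimpleGraph (Fin (Fintype.card V)), H.IsTree → mm H ≤ mm G

/-- The vertex set of the connected component of `s` in `G - st`. -/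
def sideSet {V : Type} (G : SimpleGraph V) (s t : V) : Set V :=
  {v | (G.deleteEdges {s(s, t)}).Reachable s v}

/-- The connected component of `s` in `G - st`, as a graph. -/
def sideGraph {V : Type} (G : SimpleGraph V) (s t : V) :
    SimpleGraph (sideSet G s t) :=
  (G.deleteEdges {s(s, t)}).induce (sideSet G s t)

theorem mem_sideSet_self {V : Type} (G : SimpleGraph V) (s t : V) : s ∈ sideSet G s t :=
  SimpleGraph.Reachable.refl s

/-- The root of the component of `s` in `G - st`, i.e. `s` itself. -/
def sideRoot {V : Type} (G : SimpleGraph V) (s t : V) : sideSet G s t :=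
  ⟨s, mem_sideSet_self G s t⟩

/-- `μ(T_s)` where `T_s` is the component of `s` in `G - st`. -/
noncomputable def sideMu {V : Type} (G : SimpleGraph V) (s t : V) : ℕ := matchNum (sideGraph G s t)

/-- `m(T_s)` where `T_s` is the component of `s` in `G - st`. -/
noncomputable def sideM {V : Type} (G : SimpleGraph V) (s t : V) : ℕ := mm (sideGraph G s t)

/-- `μ(T_s − s)` where `T_s` is the component of `s` in `G - st`. -/
noncomputable def sideMuDel {V : Type} (G : SimpleGraph V) (s t : V) : ℕ :=
  matchNum ((G.deleteEdges {s(s, t)}).induce (sideSet G s t \ {s}))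

/-- `m(T_s − s)` where `T_s` is the component of `s` in `G - st`. -/
noncomputable def sideMDel {V : Type} (G : SimpleGraph V) (s t : V) : ℕ :=
  mm ((G.deleteEdges {s(s, t)}).induce (sideSet G s t \ {s}))

/-- A rooted graph: a vertex type, a graph on it, and a root vertex. -/
structure RGraph : Type 1 where
  V : Type
  G : SimpleGraph V
  root : V

/-- `m(T)` for a rooted graph. -/
noncomputable def RGraph.m (T : RGraph) : ℕ := mm T.G

/-- `m_0(T) = m(T − r)` for a rooted graph with root `r`. -/
noncomputable def RGraph.m0 (T : RGraph) : ℕ := mm (T.G.induce {v | v ≠ T.root})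

/-- `m_1(T)`: the number of maximum matchings of `G` covering `r`. -/
noncomputable def mmCover {V : Type} (G : SimpleGraph V) (r : V) : ℕ :=
  {M | M ∈ MaximumMatchings G ∧ Covers M r}.ncard

/-- The order (number of vertices) of a rooted graph. -/
noncomputable def RGraph.order (T : RGraph) : ℕ := Nat.card T.V

/-- Isomorphism of rooted graphs: a graph isomorphism mapping root to root. -/
def RGraph.RIso (T T' : RGraph) : Prop :=
  ∃ φ : T.G ≃g T'.G, φ T.root = T'.root

/-- The one-vertex rooted tree `L`. -/
def rL : RGraph := ⟨PUnit, ⊥, PUnit.unit⟩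

/-- The fork `F`: the root `0` is adjacent to `1`, which is adjacent to the leaves `2`, `3`. -/
def rF : RGraph :=
  ⟨Fin 4, SimpleGraph.fromRel (fun a b => (a = 0 ∧ b = 1) ∨ (a = 1 ∧ b = 2) ∨ (a = 1 ∧ b = 3)), 0⟩

/-- The rooted tree `B₂*`: a single edge rooted at one endpoint. -/
def rB2 : RGraph := ⟨Fin 2, SimpleGraph.fromRel (fun a b => a = 0 ∧ b = 1), 0⟩

/-- The rooted tree `A₃*`: a path on three vertices rooted at an endpoint. -/
def rA3 : RGraph :=
  ⟨Fin 3, SimpleGraph.fromRel (fun a b => (a = 0 ∧ b = 1) ∨ (a = 1 ∧ b = 2)), 0⟩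

/-- The `k`-claw: the star `K_{1,k}` rooted at its center. -/
def claw (k : ℕ) : RGraph :=
  ⟨Fin (k + 1), SimpleGraph.fromRel (fun a b => a = 0 ∧ b ≠ 0), 0⟩

/-- The chain construction `C`: seven new vertices are added to the rooted tree `T`;
`Sum.inr 0` is the new root `s`, `Sum.inr 1` is the vertex `b` adjacent to `s`, to the new
leaf `Sum.inr 2`, to the root `Sum.inr 3` of a new fork (with center `Sum.inr 4` and leaves
`Sum.inr 5`, `Sum.inr 6`), and to the old root of `T`. -/
def consC (T : RGraph) : RGraph where
  V := T.V ⊕ Fin 7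
  G := SimpleGraph.fromRel (fun a b =>
    (∃ x y, T.G.Adj x y ∧ a = Sum.inl x ∧ b = Sum.inl y) ∨
    (a = Sum.inr 0 ∧ b = Sum.inr 1) ∨
    (a = Sum.inr 1 ∧ b = Sum.inr 2) ∨
    (a = Sum.inr 1 ∧ b = Sum.inr 3) ∨
    (a = Sum.inr 3 ∧ b = Sum.inr 4) ∨
    (a = Sum.inr 4 ∧ b = Sum.inr 5) ∨
    (a = Sum.inr 4 ∧ b = Sum.inr 6) ∨
    (a = Sum.inr 1 ∧ b = Sum.inl T.root))
  root := Sum.inr 0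

/-- `hang T S`: the disjoint union of rooted graphs `T` and `S` together with an edge
joining their roots; the root of the result is the root of `T`. -/
def hang (T S : RGraph) : RGraph where
  V := T.V ⊕ S.V
  G := SimpleGraph.fromRel (fun a b =>
    (∃ x y, T.G.Adj x y ∧ a = Sum.inl x ∧ b = Sum.inl y) ∨
    (∃ x y, S.G.Adj x y ∧ a = Sum.inr x ∧ b = Sum.inr y) ∨
    (a = Sum.inl T.root ∧ b = Sum.inr S.root))
  root := Sum.inl T.root

/-- The rooted subtree of `G` cut off by the edge `st` on the side of `s`, rooted at `s`. -/
def sideRG {V : Type} (G : SimpleGraph V) (s t : V) : RGraph :=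
  ⟨sideSet G s t, sideGraph G s t, sideRoot G s t⟩

/-- `y` lies on the path from `x` to the root of `T`. -/
def OnRootPath (T : RGraph) (x y : T.V) : Prop := ∀ p : T.G.Walk x T.root, y ∈ p.support

/-- The rooted graph `T` contains a `k`-claw: either `T` itself is a `k`-claw, or
there is an edge `xy` of `T` with `y` on the path from `x` to the root such that
the component of `x` in `T − xy`, rooted at `x`, is a `k`-claw. -/
def ContainsClaw (T : RGraph) (k : ℕ) : Prop :=
  T.RIso (claw k) ∨
  ∃ x y : T.V, T.G.Adj x y ∧ OnRootPath T x y ∧ (sideRG T.G x y).RIso (claw k)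

/-- The vertex set of the branch of the rooted graph `(G, r)` containing the
neighbour `x` of `r`: all vertices reachable from `x` avoiding `r`. -/
def branchSet {V : Type} (G : SimpleGraph V) (r x : V) : Set V :=
  {v | ∃ p : G.Walk x v, r ∉ p.support}

/-- `m` of the branch of `(G, r)` at the neighbour `x`. -/
noncomputable def branchM {V : Type} (G : SimpleGraph V) (r x : V) : ℕ :=
  mm (G.induce (branchSet G r x))

/-- `m_0` of the branch of `(G, r)` at the neighbour `x` (the branch is rooted at `x`). -/
noncomputable def branchM0 {V : Type} (G : SimpleGraph V) (r x : V) : ℕ :=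
  mm (G.induce (branchSet G r x \ {x}))

/-- The branch of `(G, r)` at the neighbour `x`, rooted at `x`, is of type A. -/
def BranchTypeA {V : Type} (G : SimpleGraph V) (r x : V) : Prop :=
  ∃ h : x ∈ branchSet G r x, TypeA (G.induce (branchSet G r x)) ⟨x, h⟩

/-- The branch of `(G, r)` at the neighbour `x`, rooted at `x`, is of type B. -/
def BranchTypeB {V : Type} (G : SimpleGraph V) (r x : V) : Prop :=
  ∃ h : x ∈ branchSet G r x, TypeB (G.induce (branchSet G r x)) ⟨x, h⟩

/-- The bipartition condition for rooted trees: a one-vertex rooted tree fulfils it,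
and a rooted tree fulfils it if all of its branches (each rooted at the corresponding
neighbour of the root) fulfil it and have type different from the type of the root. -/
inductive BipCond : {V : Type} → SimpleGraph V → V → Prop where
  | single {V : Type} (G : SimpleGraph V) (r : V) (h : ∀ v : V, v = r) : BipCond G r
  | node {V : Type} (G : SimpleGraph V) (r : V)
      (hrec : ∀ (x : V), G.Adj r x → ∀ (hm : x ∈ branchSet G r x),
        BipCond (G.induce (branchSet G r x)) ⟨x, hm⟩)
      (htype : ∀ (x : V), G.Adj r x → ∀ (hm : x ∈ branchSet G r x),
        ¬ (TypeA G r ↔ TypeA (G.induce (branchSet G r x)) ⟨x, hm⟩)) :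
      BipCond G r

/-- The integer sequence `G_j` with `G_0 = 0`, `G_1 = 1`, `G_{j+2} = 11 G_{j+1} − 9 G_j`. -/
def Gseq : ℕ → ℤ
  | 0 => 0
  | 1 => 1
  | (n + 2) => 11 * Gseq (n + 1) - 9 * Gseq n

/-- Attach one new pendant vertex to the vertex `w` of `H`. -/
def addLeaf {W : Type} (H : SimpleGraph W) (w : W) : SimpleGraph (W ⊕ Unit) :=
  SimpleGraph.fromRel (fun a b =>
    (∃ x y, H.Adj x y ∧ a = Sum.inl x ∧ b = Sum.inl y) ∨
    (a = Sum.inl w ∧ b = Sum.inr ()))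

/-- The 6-vertex spider with legs of lengths 1, 1 and 3 attached to the center `0`. -/
def spider6 : SimpleGraph (Fin 6) :=
  SimpleGraph.fromRel (fun a b =>
    (a = 0 ∧ b = 1) ∨ (a = 0 ∧ b = 2) ∨ (a = 0 ∧ b = 3) ∨ (a = 3 ∧ b = 4) ∨ (a = 4 ∧ b = 5))

/-! In a matching of `CT` every edge of the gadget passes through `b = Sum.inr 1` or through the
fork centre `c = Sum.inr 4`, so at most two gadget edges are used and the rest is a matching of
`T`; hence `μ(CT) = μ(T) + 2`. A maximum matching of `CT` is therefore the choice of an edge at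
`b`, an edge at `c` and a maximum matching `N` of `T`, subject to two constraints: the edge from
`b` to the fork root excludes the edge from the fork root to `c`, and the edge `br` forces `N` to
miss `r`, which leaves `m₀(T)` choices of `N` because `r` is of type A. This gives
`3m + 3m + 2m + 3m₀` maximum matchings, and those missing `s` are the `5m + 3m₀` that do not use
the edge `sb`. The closed forms follow by induction from `m(L) = m₀(L) = 1`, `m(F) = 3`,
`m₀(F) = 2`. -/

section Matchings

variable {V W : Type} {G : SimpleGraph V} {H : SimpleGraph W}

lemma isMatchingSet_empty : IsMatchingSet G ∅ := ⟨Set.empty_subset _, Set.pairwise_empty _⟩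

lemma IsMatchingSet.mono {M M' : Set (Sym2 V)} (hM : IsMatchingSet G M) (h : M' ⊆ M) :
    IsMatchingSet G M' :=
  ⟨h.trans hM.1, hM.2.mono h⟩

lemma IsMatchingSet.inter_subsingleton {M S : Set (Sym2 V)} (hM : IsMatchingSet G M) {v : V}
    (hS : ∀ e ∈ S, v ∈ e) : (M ∩ S).Subsingleton := by
  intro e he f hf
  by_contra hef
  exact hM.2 he.1 hf.1 hef v ⟨hS e he.2, hS f hf.2⟩

lemma isMatchingSet_image_iff (f : H ↪g G) (N : Set (Sym2 W)) :
    IsMatchingSet G (Sym2.map f '' N) ↔ IsMatchingSet H N := by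
  have hinj : Function.Injective (Sym2.map f) := Sym2.map.injective f.injective
  rw [IsMatchingSet, IsMatchingSet, Set.image_subset_iff, f.preimage_edgeSet,
    hinj.injOn.pairwise_image]
  congr! 2
  funext e e'
  simp only [Function.onFun, Sym2.mem_map, eq_iff_iff]
  constructor
  · intro h v hv
    exact h (f v) ⟨⟨v, hv.1, rfl⟩, ⟨v, hv.2, rfl⟩⟩
  · rintro h _ ⟨⟨v, hv, rfl⟩, ⟨w, hw, hwv⟩⟩
    exact h v ⟨hv, f.injective hwv ▸ hw⟩

lemma matchNum_le_of_forall {n : ℕ} (h : ∀ M, IsMatchingSet G M → M.ncard ≤ n) :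
    matchNum G ≤ n :=
  csSup_le ⟨0, ∅, isMatchingSet_empty, Set.ncard_empty _⟩ (by rintro k ⟨M, hM, rfl⟩; exact h M hM)

lemma maximumMatchings_of_forall_not_adj (h : ∀ a b, ¬ G.Adj a b) :
    MaximumMatchings G = {∅} := by
  have hE : ∀ M, IsMatchingSet G M → M = ∅ := fun M hM =>
    Set.subset_empty_iff.1 (hM.1.trans fun e he => by induction e with | _ a b => exact h a b he)
  have hnum : matchNum G = 0 :=
    Nat.eq_zero_of_le_zero (matchNum_le_of_forall fun M hM => by simp [hE M hM])
  ext M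
  simp only [MaximumMatchings, Set.mem_ofPred_eq, Set.mem_singleton_iff, hnum]
  exact ⟨fun hM => hE M hM.1, by rintro rfl; exact ⟨isMatchingSet_empty, Set.ncard_empty _⟩⟩

lemma mm_of_forall_not_adj (h : ∀ a b, ¬ G.Adj a b) : mm G = 1 := by
  rw [mm, maximumMatchings_of_forall_not_adj h, Set.ncard_singleton]

variable [Finite V]

lemma bddAbove_matchingSizes :
    BddAbove {n | ∃ M : Set (Sym2 V), IsMatchingSet G M ∧ M.ncard = n} :=
  ⟨Nat.card (Sym2 V), by
    rintro _ ⟨M, -, rfl⟩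
    exact Set.ncard_le_card M⟩

lemma IsMatchingSet.ncard_le_matchNum {M : Set (Sym2 V)} (hM : IsMatchingSet G M) :
    M.ncard ≤ matchNum G :=
  le_csSup bddAbove_matchingSizes ⟨M, hM, rfl⟩

lemma maximumMatchings_nonempty : (MaximumMatchings G).Nonempty := by
  obtain ⟨M, hM, hcard⟩ := Nat.sSup_mem (s := {n | ∃ M, IsMatchingSet G M ∧ M.ncard = n})
    ⟨0, ∅, isMatchingSet_empty, Set.ncard_empty _⟩ bddAbove_matchingSizes
  exact ⟨M, hM, hcard⟩

lemma image_maximumMatchings_of_embedding (f : H ↪g G)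
    (h : ∃ M ∈ MaximumMatchings G, M ⊆ Set.range (Sym2.map f)) :
    Set.image (Sym2.map f) '' MaximumMatchings H =
      {M | M ∈ MaximumMatchings G ∧ M ⊆ Set.range (Sym2.map f)} := by
  have : Finite W := Finite.of_injective f f.injective
  have hinj : Function.Injective (Sym2.map f) := Sym2.map.injective f.injective
  have hnum : matchNum H = matchNum G := by
    obtain ⟨M, ⟨hM, hcard⟩, hMf⟩ := h
    refine le_antisymm (matchNum_le_of_forall fun N hN => ?_) ?_
    · rw [← Set.ncard_image_of_injective _ hinj]
      exact ((isMatchingSet_image_iff f N).2 hN).ncard_le_matchNum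
    · rw [← Set.image_preimage_eq_of_subset hMf] at hM hcard
      rw [← hcard, Set.ncard_image_of_injective _ hinj]
      exact ((isMatchingSet_image_iff f _).1 hM).ncard_le_matchNum
  ext M
  constructor
  · rintro ⟨N, ⟨hN, hcard⟩, rfl⟩
    refine ⟨⟨(isMatchingSet_image_iff f N).2 hN, ?_⟩, Set.image_subset_range _ _⟩
    rw [Set.ncard_image_of_injective _ hinj, hcard, hnum]
  · rintro ⟨⟨hM, hcard⟩, hMf⟩
    rw [← Set.image_preimage_eq_of_subset hMf] at hM hcard ⊢
    refine ⟨_, ⟨(isMatchingSet_image_iff f _).1 hM, ?_⟩, rfl⟩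
    rw [hnum, ← hcard, Set.ncard_image_of_injective _ hinj]

variable {c : V}

lemma maximumMatchings_of_forall_mem (hc : ∀ e ∈ G.edgeSet, c ∈ e) (hne : G.edgeSet.Nonempty) :
    MaximumMatchings G = (fun e => {e}) '' G.edgeSet := by
  have hle : ∀ M, IsMatchingSet G M → M.ncard ≤ 1 := fun M hM =>
    Set.ncard_le_one_iff_subsingleton.2 <| by
      simpa [Set.inter_eq_left.2 hM.1] using hM.inter_subsingleton hc
  have hsingle : ∀ e ∈ G.edgeSet, IsMatchingSet G {e} := fun e he =>
    ⟨Set.singleton_subset_iff.2 he, Set.pairwise_singleton _ _⟩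
  have hnum : matchNum G = 1 := by
    obtain ⟨e, he⟩ := hne
    refine le_antisymm (matchNum_le_of_forall hle) ?_
    simpa using (hsingle e he).ncard_le_matchNum
  ext M
  simp only [MaximumMatchings, Set.mem_ofPred_eq, Set.mem_image, hnum]
  constructor
  · rintro ⟨hM, hcard⟩
    obtain ⟨e, rfl⟩ := Set.ncard_eq_one.1 hcard
    exact ⟨e, hM.1 rfl, rfl⟩
  · rintro ⟨e, he, rfl⟩
    exact ⟨hsingle e he, Set.ncard_singleton e⟩

lemma mm_of_forall_mem (hc : ∀ e ∈ G.edgeSet, c ∈ e) (hne : G.edgeSet.Nonempty) :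
    mm G = G.edgeSet.ncard := by
  rw [mm, maximumMatchings_of_forall_mem hc hne,
    Set.ncard_image_of_injective _ Set.singleton_injective]

lemma ncard_not_covers_of_forall_mem (hc : ∀ e ∈ G.edgeSet, c ∈ e) (hne : G.edgeSet.Nonempty)
    (r : V) : {M | M ∈ MaximumMatchings G ∧ ¬ Covers M r}.ncard =
      {e | e ∈ G.edgeSet ∧ r ∉ e}.ncard := by
  rw [← Set.ncard_image_of_injective {e | e ∈ G.edgeSet ∧ r ∉ e} Set.singleton_injective]
  congr 1
  ext M
  simp only [maximumMatchings_of_forall_mem hc hne, Covers, Set.mem_ofPred_eq, Set.mem_image]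
  constructor
  · rintro ⟨⟨e, he, rfl⟩, hr⟩
    exact ⟨e, ⟨he, fun h => hr ⟨e, rfl, h⟩⟩, rfl⟩
  · rintro ⟨e, ⟨he, hr⟩, rfl⟩
    exact ⟨⟨e, he, rfl⟩, by simpa using hr⟩

end Matchings

section DeleteVertex

variable {V : Type} {G : SimpleGraph V} {r : V}

lemma not_covers_iff_subset_range {M : Set (Sym2 V)} :
    ¬ Covers M r ↔ M ⊆ Set.range (Sym2.map (Embedding.induce (G := G) {v | v ≠ r})) := by
  constructor
  · intro hM e he
    induction e with
    | _ x y =>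
      have hx : x ≠ r := fun h => hM ⟨_, he, h ▸ Sym2.mem_mk_left x y⟩
      have hy : y ≠ r := fun h => hM ⟨_, he, h ▸ Sym2.mem_mk_right x y⟩
      exact ⟨s(⟨x, hx⟩, ⟨y, hy⟩), rfl⟩
  · rintro hM ⟨_, he, hr⟩
    obtain ⟨e, rfl⟩ := hM he
    obtain ⟨⟨v, hv⟩, -, hvr⟩ := Sym2.mem_map.1 hr
    exact hv hvr

lemma mm_induce_ne_of_typeA [Finite V] (h : TypeA G r) :
    mm (G.induce {v | v ≠ r}) = {M | M ∈ MaximumMatchings G ∧ ¬ Covers M r}.ncard := by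
  obtain ⟨M, hM, hr⟩ := h
  simp only [not_covers_iff_subset_range (G := G)]
  rw [← image_maximumMatchings_of_embedding _ ⟨M, hM, not_covers_iff_subset_range.1 hr⟩,
    Set.ncard_image_of_injective _ (Set.image_injective.2 (Sym2.map.injective
      (Embedding.induce _).injective)), mm]

end DeleteVertex

lemma RGraph.m0_eq_ncard {T : RGraph} [Finite T.V] (hA : TypeA T.G T.root) :
    T.m0 = {N | N ∈ MaximumMatchings T.G ∧ ¬ Covers N T.root}.ncard :=
  mm_induce_ne_of_typeA hA

namespace consC

variable (T : RGraph)

/-- `(consC T).G` with its vertex type exposed as `T.V ⊕ Fin 7`, so that rewriting with lemmas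
about sums and `Sym2.map Sum.inl` type-checks. -/
abbrev graph : SimpleGraph (T.V ⊕ Fin 7) := (consC T).G

lemma adj_inl_inl {x y : T.V} : (graph T).Adj (Sum.inl x) (Sum.inl y) ↔ T.G.Adj x y := by
  simp only [graph, consC, fromRel_adj, Sum.inl.injEq, reduceCtorEq, false_and, and_false,
    or_false, existsAndEq, and_true]
  exact ⟨fun h => h.2.elim id (·.symm), fun h => ⟨by simpa using h.ne, Or.inl h⟩⟩

def inlEmbedding : T.G ↪g graph T where
  toFun := Sum.inl
  inj' := Sum.inl_injective
  map_rel_iff' := adj_inl_inl T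

def e01 : Sym2 (T.V ⊕ Fin 7) := s(Sum.inr 0, Sum.inr 1)
def e12 : Sym2 (T.V ⊕ Fin 7) := s(Sum.inr 1, Sum.inr 2)
def e13 : Sym2 (T.V ⊕ Fin 7) := s(Sum.inr 1, Sum.inr 3)
def e1r : Sym2 (T.V ⊕ Fin 7) := s(Sum.inr 1, Sum.inl T.root)
def e34 : Sym2 (T.V ⊕ Fin 7) := s(Sum.inr 3, Sum.inr 4)
def e45 : Sym2 (T.V ⊕ Fin 7) := s(Sum.inr 4, Sum.inr 5)
def e46 : Sym2 (T.V ⊕ Fin 7) := s(Sum.inr 4, Sum.inr 6)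

def bEdges : Set (Sym2 (T.V ⊕ Fin 7)) := {e01 T, e12 T, e13 T, e1r T}
def cEdges : Set (Sym2 (T.V ⊕ Fin 7)) := {e34 T, e45 T, e46 T}

lemma edgeSet_subset :
    (graph T).edgeSet ⊆ Set.range (Sym2.map Sum.inl) ∪ bEdges T ∪ cEdges T := by
  intro e he
  induction e with
  | _ a b =>
  rw [SimpleGraph.mem_edgeSet] at he
  simp only [graph, consC, fromRel_adj] at he
  simp only [bEdges, cEdges, e01, e12, e13, e1r, e34, e45, e46, Set.mem_union,
    Set.mem_insert_iff, Set.mem_singleton_iff, Set.mem_range]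
  obtain ⟨-, (⟨x, y, -, rfl, rfl⟩ | h) | (⟨x, y, -, rfl, rfl⟩ | h)⟩ := he
  · exact Or.inl (Or.inl ⟨s(x, y), rfl⟩)
  · rcases h with ⟨rfl, rfl⟩ | ⟨rfl, rfl⟩ | ⟨rfl, rfl⟩ | ⟨rfl, rfl⟩ | ⟨rfl, rfl⟩ | ⟨rfl, rfl⟩ |
      ⟨rfl, rfl⟩ <;> simp
  · exact Or.inl (Or.inl ⟨s(y, x), rfl⟩)
  · rcases h with ⟨rfl, rfl⟩ | ⟨rfl, rfl⟩ | ⟨rfl, rfl⟩ | ⟨rfl, rfl⟩ | ⟨rfl, rfl⟩ | ⟨rfl, rfl⟩ |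
      ⟨rfl, rfl⟩ <;> simp [Sym2.eq_swap]

lemma bEdges_subset : bEdges T ⊆ (graph T).edgeSet := by
  simp [bEdges, Set.insert_subset_iff, e01, e12, e13, e1r, graph, consC]

lemma cEdges_subset : cEdges T ⊆ (graph T).edgeSet := by
  simp [cEdges, Set.insert_subset_iff, e34, e45, e46, graph, consC]

def coveringChoices : Set (Sym2 (T.V ⊕ Fin 7) × Sym2 (T.V ⊕ Fin 7) × Set (Sym2 T.V)) :=
  {e01 T} ×ˢ cEdges T ×ˢ MaximumMatchings T.G

def freeChoices : Set (Sym2 (T.V ⊕ Fin 7) × Sym2 (T.V ⊕ Fin 7) × Set (Sym2 T.V)) :=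
  {e12 T} ×ˢ cEdges T ×ˢ MaximumMatchings T.G ∪ {e13 T} ×ˢ {e45 T, e46 T} ×ˢ MaximumMatchings T.G ∪
    {e1r T} ×ˢ cEdges T ×ˢ {N | N ∈ MaximumMatchings T.G ∧ ¬ Covers N T.root}

variable {T}

lemma inr_notMem_of_mem_range {e : Sym2 (T.V ⊕ Fin 7)} (he : e ∈ Set.range (Sym2.map Sum.inl))
    (i : Fin 7) : Sum.inr i ∉ e := by
  obtain ⟨e, rfl⟩ := he
  simp [Sym2.mem_map]

lemma b_mem_of_mem_bEdges {e : Sym2 (T.V ⊕ Fin 7)} (he : e ∈ bEdges T) : Sum.inr 1 ∈ e := by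
  rcases he with rfl | rfl | rfl | rfl <;> simp [e01, e12, e13, e1r]

lemma c_mem_of_mem_cEdges {e : Sym2 (T.V ⊕ Fin 7)} (he : e ∈ cEdges T) : Sum.inr 4 ∈ e := by
  rcases he with rfl | rfl | rfl <;> simp [e34, e45, e46]

lemma b_notMem_of_mem_cEdges {e : Sym2 (T.V ⊕ Fin 7)} (he : e ∈ cEdges T) : Sum.inr 1 ∉ e := by
  rcases he with rfl | rfl | rfl <;> simp [e34, e45, e46]

lemma inl_mem_of_mem_bEdges {e : Sym2 (T.V ⊕ Fin 7)} (he : e ∈ bEdges T) {x : T.V}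
    (hx : Sum.inl x ∈ e) : e = e1r T ∧ x = T.root := by
  rcases he with rfl | rfl | rfl | rfl <;> simp_all [e01, e12, e13, e1r]

lemma inl_notMem_of_mem_cEdges {e : Sym2 (T.V ⊕ Fin 7)} (he : e ∈ cEdges T) (x : T.V) :
    Sum.inl x ∉ e := by
  rcases he with rfl | rfl | rfl <;> simp [e34, e45, e46]

lemma notMem_range_of_mem_bEdges {e : Sym2 (T.V ⊕ Fin 7)} (he : e ∈ bEdges T) :
    e ∉ Set.range (Sym2.map Sum.inl) := fun h =>
  inr_notMem_of_mem_range h 1 (b_mem_of_mem_bEdges he)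

lemma notMem_range_of_mem_cEdges {e : Sym2 (T.V ⊕ Fin 7)} (he : e ∈ cEdges T) :
    e ∉ Set.range (Sym2.map Sum.inl) := fun h =>
  inr_notMem_of_mem_range h 4 (c_mem_of_mem_cEdges he)

lemma no_common_vertex_of_mem_bEdges_cEdges {eb ec : Sym2 (T.V ⊕ Fin 7)} (heb : eb ∈ bEdges T)
    (hec : ec ∈ cEdges T) (h : ¬(eb = e13 T ∧ ec = e34 T)) : ∀ v, ¬(v ∈ eb ∧ v ∈ ec) := by
  rcases heb with rfl | rfl | rfl | rfl <;> rcases hec with rfl | rfl | rfl <;>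
    simp_all [e01, e12, e13, e1r, e34, e45, e46, Sym2.mem_iff]

lemma isMatchingSet_preimage_inl {M : Set (Sym2 (T.V ⊕ Fin 7))}
    (hM : IsMatchingSet (graph T) M) : IsMatchingSet T.G (Sym2.map Sum.inl ⁻¹' M) :=
  (isMatchingSet_image_iff (inlEmbedding T) _).1 (hM.mono (Set.image_preimage_subset _ _))

lemma eq_union_of_subset {M : Set (Sym2 (T.V ⊕ Fin 7))}
    (hM : M ⊆ Set.range (Sym2.map Sum.inl) ∪ bEdges T ∪ cEdges T) :
    M = Sym2.map Sum.inl '' (Sym2.map Sum.inl ⁻¹' M) ∪ M ∩ bEdges T ∪ M ∩ cEdges T := by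
  rw [Set.image_preimage_eq_inter_range, ← Set.inter_union_distrib_left,
    ← Set.inter_union_distrib_left, Set.inter_eq_left.2 hM]

def assemble (p : Sym2 (T.V ⊕ Fin 7) × Sym2 (T.V ⊕ Fin 7) × Set (Sym2 T.V)) :
    Set (Sym2 (T.V ⊕ Fin 7)) :=
  Sym2.map Sum.inl '' p.2.2 ∪ {p.1, p.2.1}

section Assemble

variable {eb ec : Sym2 (T.V ⊕ Fin 7)}

lemma preimage_inl_assemble (heb : eb ∈ bEdges T) (hec : ec ∈ cEdges T) (N : Set (Sym2 T.V)) :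
    Sym2.map Sum.inl ⁻¹' assemble (eb, ec, N) = N := by
  ext e
  simp only [assemble, Set.mem_preimage, Set.mem_union, Set.mem_insert_iff, Set.mem_singleton_iff,
    (Sym2.map.injective Sum.inl_injective).mem_set_image]
  constructor
  · rintro (h | rfl | rfl)
    · exact h
    · exact absurd ⟨e, rfl⟩ (notMem_range_of_mem_bEdges heb)
    · exact absurd ⟨e, rfl⟩ (notMem_range_of_mem_cEdges hec)
  · exact Or.inl

lemma assemble_inter_bEdges (heb : eb ∈ bEdges T) (hec : ec ∈ cEdges T) (N : Set (Sym2 T.V)) :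
    assemble (eb, ec, N) ∩ bEdges T = {eb} := by
  ext e
  simp only [assemble, Set.mem_inter_iff, Set.mem_union, Set.mem_insert_iff, Set.mem_singleton_iff]
  constructor
  · rintro ⟨⟨n, -, rfl⟩ | h | rfl, he⟩
    · exact absurd ⟨n, rfl⟩ (notMem_range_of_mem_bEdges he)
    · exact h
    · exact absurd (b_mem_of_mem_bEdges he) (b_notMem_of_mem_cEdges hec)
  · rintro rfl
    exact ⟨Or.inr (Or.inl rfl), heb⟩

lemma assemble_inter_cEdges (heb : eb ∈ bEdges T) (hec : ec ∈ cEdges T) (N : Set (Sym2 T.V)) :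
    assemble (eb, ec, N) ∩ cEdges T = {ec} := by
  ext e
  simp only [assemble, Set.mem_inter_iff, Set.mem_union, Set.mem_insert_iff, Set.mem_singleton_iff]
  constructor
  · rintro ⟨⟨n, -, rfl⟩ | rfl | h, he⟩
    · exact absurd ⟨n, rfl⟩ (notMem_range_of_mem_cEdges he)
    · exact absurd (b_mem_of_mem_bEdges heb) (b_notMem_of_mem_cEdges he)
    · exact h
  · rintro rfl
    exact ⟨Or.inr (Or.inr rfl), hec⟩

lemma isMatchingSet_assemble_iff (heb : eb ∈ bEdges T) (hec : ec ∈ cEdges T)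
    {N : Set (Sym2 T.V)} (hN : IsMatchingSet T.G N) :
    IsMatchingSet (graph T) (assemble (eb, ec, N)) ↔
      ¬(eb = e13 T ∧ ec = e34 T) ∧ (eb = e1r T → ¬ Covers N T.root) := by
  have hebc : eb ≠ ec := fun h => b_notMem_of_mem_cEdges hec (h ▸ b_mem_of_mem_bEdges heb)
  have hNG := (isMatchingSet_image_iff (inlEmbedding T) N).2 hN
  constructor
  · intro hM
    refine ⟨?_, ?_⟩
    · rintro ⟨rfl, rfl⟩
      exact hM.2 (Or.inr (Or.inl rfl)) (Or.inr (Or.inr rfl)) hebc (Sum.inr 3)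
        ⟨by simp [e13], by simp [e34]⟩
    · rintro rfl ⟨n, hn, hr⟩
      exact hM.2 (Or.inl ⟨n, hn, rfl⟩) (Or.inr (Or.inl rfl))
        (fun h => notMem_range_of_mem_bEdges heb ⟨n, h⟩) (Sum.inl T.root)
        ⟨Sym2.mem_map.2 ⟨_, hr, rfl⟩, by simp [e1r]⟩
  · rintro ⟨h13, h1r⟩
    have hsymm : ∀ e f : Sym2 (T.V ⊕ Fin 7), (∀ v, ¬(v ∈ e ∧ v ∈ f)) → ∀ v, ¬(v ∈ f ∧ v ∈ e) :=
      fun e f h v hv => h v hv.symm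
    have hbc := no_common_vertex_of_mem_bEdges_cEdges heb hec h13
    refine ⟨Set.union_subset hNG.1 (Set.pair_subset (bEdges_subset T heb) (cEdges_subset T hec)),
      Set.pairwise_union.2 ⟨hNG.2, Set.pairwise_pair.2 fun _ => ⟨hbc, hsymm _ _ hbc⟩, ?_⟩⟩
    rintro _ ⟨n, hn, rfl⟩ f hf -
    suffices h : ∀ v, ¬(v ∈ Sym2.map Sum.inl n ∧ v ∈ f) from ⟨h, hsymm _ _ h⟩
    rintro _ ⟨hv, hvf⟩
    obtain ⟨x, hx, rfl⟩ := Sym2.mem_map.1 hv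
    rcases hf with rfl | rfl
    · obtain ⟨rfl, rfl⟩ := inl_mem_of_mem_bEdges heb hvf
      exact h1r rfl ⟨n, hn, hx⟩
    · exact inl_notMem_of_mem_cEdges hec x hvf

lemma covers_inr_zero_assemble (heb : eb ∈ bEdges T) (hec : ec ∈ cEdges T)
    (N : Set (Sym2 T.V)) : Covers (assemble (eb, ec, N)) (Sum.inr 0) ↔ eb = e01 T := by
  constructor
  · rintro ⟨e, ⟨n, -, rfl⟩ | rfl | rfl, h0⟩
    · exact absurd h0 (inr_notMem_of_mem_range ⟨n, rfl⟩ 0)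
    · rcases heb with rfl | rfl | rfl | rfl <;> simp_all [e01, e12, e13, e1r]
    · rcases hec with rfl | rfl | rfl <;> simp_all [e34, e45, e46]
  · rintro rfl
    exact ⟨e01 T, Or.inr (Or.inl rfl), by simp [e01]⟩

end Assemble

lemma assemble_injOn :
    Set.InjOn assemble {p : _ × _ × Set (Sym2 T.V) | p.1 ∈ bEdges T ∧ p.2.1 ∈ cEdges T} := by
  rintro ⟨eb, ec, N⟩ ⟨heb, hec⟩ ⟨eb', ec', N'⟩ ⟨heb', hec'⟩ h
  have hb := congrArg (· ∩ bEdges T) h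
  have hc := congrArg (· ∩ cEdges T) h
  have hN := congrArg (Sym2.map Sum.inl ⁻¹' ·) h
  simp only [assemble_inter_bEdges heb hec, assemble_inter_bEdges heb' hec',
    assemble_inter_cEdges heb hec, assemble_inter_cEdges heb' hec', preimage_inl_assemble heb hec,
    preimage_inl_assemble heb' hec', Set.singleton_eq_singleton_iff] at hb hc hN
  rw [hb, hc, hN]

lemma mem_choices_iff {p : Sym2 (T.V ⊕ Fin 7) × Sym2 (T.V ⊕ Fin 7) × Set (Sym2 T.V)} :
    p ∈ coveringChoices T ∪ freeChoices T ↔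
      p.1 ∈ bEdges T ∧ p.2.1 ∈ cEdges T ∧ p.2.2 ∈ MaximumMatchings T.G ∧
        ¬(p.1 = e13 T ∧ p.2.1 = e34 T) ∧ (p.1 = e1r T → ¬ Covers p.2.2 T.root) := by
  obtain ⟨eb, ec, N⟩ := p
  simp only [coveringChoices, freeChoices, bEdges, cEdges, Set.mem_union, Set.mem_prod,
    Set.mem_insert_iff, Set.mem_singleton_iff]
  constructor
  · rintro (⟨rfl, hc, hN⟩ | (⟨rfl, hc, hN⟩ | ⟨rfl, rfl | rfl, hN⟩) | ⟨rfl, hc, hN, hr⟩) <;>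
      simp_all [e01, e12, e13, e1r, e34, e45, e46]
  · rintro ⟨rfl | rfl | rfl | rfl, hc, hN, h13, h1r⟩ <;>
      simp_all [e01, e12, e13, e1r, e34, e45, e46]

lemma injOn_assemble_choices : Set.InjOn assemble (coveringChoices T ∪ freeChoices T) :=
  assemble_injOn.mono fun p hp =>
    (⟨(mem_choices_iff.1 hp).1, (mem_choices_iff.1 hp).2.1⟩ : p.1 ∈ bEdges T ∧ p.2.1 ∈ cEdges T)

lemma disjoint_coveringChoices_freeChoices : Disjoint (coveringChoices T) (freeChoices T) := by
  simp only [coveringChoices, freeChoices, Set.disjoint_union_right, Set.disjoint_prod]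
  simp [e01, e12, e13, e1r]

variable [Finite T.V]

instance : Finite (consC T).V := inferInstanceAs (Finite (T.V ⊕ Fin 7))

lemma ncard_eq_of_subset {M : Set (Sym2 (T.V ⊕ Fin 7))}
    (hM : M ⊆ Set.range (Sym2.map Sum.inl) ∪ bEdges T ∪ cEdges T) :
    M.ncard = (Sym2.map Sum.inl ⁻¹' M).ncard + (M ∩ bEdges T).ncard + (M ∩ cEdges T).ncard := by
  have hb : Disjoint (Sym2.map Sum.inl '' (Sym2.map Sum.inl ⁻¹' M)) (M ∩ bEdges T) :=
    Set.disjoint_left.2 fun _ he heb =>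
      notMem_range_of_mem_bEdges heb.2 (Set.image_subset_range _ _ he)
  have hc : Disjoint (Sym2.map Sum.inl '' (Sym2.map Sum.inl ⁻¹' M) ∪ M ∩ bEdges T)
      (M ∩ cEdges T) := by
    refine Set.disjoint_left.2 fun e he hec => ?_
    rcases he with he | heb
    · exact notMem_range_of_mem_cEdges hec.2 (Set.image_subset_range _ _ he)
    · exact b_notMem_of_mem_cEdges hec.2 (b_mem_of_mem_bEdges heb.2)
  conv_lhs => rw [eq_union_of_subset hM]
  rw [Set.ncard_union_eq hc, Set.ncard_union_eq hb,
    Set.ncard_image_of_injective _ (Sym2.map.injective Sum.inl_injective)]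

lemma ncard_assemble {eb ec : Sym2 (T.V ⊕ Fin 7)} (heb : eb ∈ bEdges T) (hec : ec ∈ cEdges T)
    (N : Set (Sym2 T.V)) : (assemble (eb, ec, N)).ncard = N.ncard + 2 := by
  have hsub : assemble (eb, ec, N) ⊆ Set.range (Sym2.map Sum.inl) ∪ bEdges T ∪ cEdges T :=
    Set.union_subset (fun e he => Or.inl (Or.inl (Set.image_subset_range _ _ he)))
      (Set.pair_subset (Or.inl (Or.inr heb)) (Or.inr hec))
  rw [ncard_eq_of_subset hsub, preimage_inl_assemble heb hec, assemble_inter_bEdges heb hec,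
    assemble_inter_cEdges heb hec, Set.ncard_singleton, Set.ncard_singleton]

lemma ncard_inter_bEdges_le_one {M : Set (Sym2 (T.V ⊕ Fin 7))}
    (hM : IsMatchingSet (graph T) M) : (M ∩ bEdges T).ncard ≤ 1 :=
  Set.ncard_le_one_iff_subsingleton.2 (hM.inter_subsingleton fun _ => b_mem_of_mem_bEdges)

lemma ncard_inter_cEdges_le_one {M : Set (Sym2 (T.V ⊕ Fin 7))}
    (hM : IsMatchingSet (graph T) M) : (M ∩ cEdges T).ncard ≤ 1 :=
  Set.ncard_le_one_iff_subsingleton.2 (hM.inter_subsingleton fun _ => c_mem_of_mem_cEdges)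

lemma ncard_le_of_isMatchingSet {M : Set (Sym2 (T.V ⊕ Fin 7))}
    (hM : IsMatchingSet (graph T) M) : M.ncard ≤ matchNum T.G + 2 := by
  have := (isMatchingSet_preimage_inl hM).ncard_le_matchNum
  have := ncard_inter_bEdges_le_one hM
  have := ncard_inter_cEdges_le_one hM
  rw [ncard_eq_of_subset (hM.1.trans (edgeSet_subset T))]
  omega

lemma matchNum_graph : matchNum (graph T) = matchNum T.G + 2 := by
  refine le_antisymm (matchNum_le_of_forall fun M hM => ncard_le_of_isMatchingSet hM) ?_
  obtain ⟨N, hN, hcard⟩ := maximumMatchings_nonempty (G := T.G)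
  have heb : e01 T ∈ bEdges T := Or.inl rfl
  have hec : e34 T ∈ cEdges T := Or.inl rfl
  have hM := (isMatchingSet_assemble_iff heb hec hN).2 ⟨by simp [e01, e13], by simp [e01, e1r]⟩
  simpa [ncard_assemble heb hec, hcard] using hM.ncard_le_matchNum

lemma maximumMatchings_graph :
    MaximumMatchings (graph T) = assemble '' (coveringChoices T ∪ freeChoices T) := by
  ext M
  constructor
  · rintro ⟨hM, hcard⟩
    have hN := isMatchingSet_preimage_inl hM
    have hsub := hM.1.trans (edgeSet_subset T)
    have hsplit := ncard_eq_of_subset hsub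
    have := hN.ncard_le_matchNum
    have := ncard_inter_bEdges_le_one hM
    have := ncard_inter_cEdges_le_one hM
    rw [hcard, matchNum_graph] at hsplit
    set N := Sym2.map Sum.inl ⁻¹' M
    have hNcard : N.ncard = matchNum T.G := by omega
    obtain ⟨eb, hb⟩ := Set.ncard_eq_one.1 (show (M ∩ bEdges T).ncard = 1 by omega)
    obtain ⟨ec, hc⟩ := Set.ncard_eq_one.1 (show (M ∩ cEdges T).ncard = 1 by omega)
    have heb : eb ∈ bEdges T := (hb.symm.subset rfl).2
    have hec : ec ∈ cEdges T := (hc.symm.subset rfl).2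
    have hMeq : M = assemble (eb, ec, N) := by
      rw [eq_union_of_subset hsub, hb, hc, assemble, Set.union_assoc, Set.singleton_union]
    refine ⟨(eb, ec, N), mem_choices_iff.2 ⟨heb, hec, ⟨hN, hNcard⟩, ?_⟩, hMeq.symm⟩
    exact (isMatchingSet_assemble_iff heb hec hN).1 (hMeq ▸ hM)
  · rintro ⟨⟨eb, ec, N⟩, hp, rfl⟩
    obtain ⟨heb, hec, ⟨hN, hcard⟩, hcompat⟩ := mem_choices_iff.1 hp
    refine ⟨(isMatchingSet_assemble_iff heb hec hN).2 hcompat, ?_⟩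
    rw [ncard_assemble heb hec, hcard, matchNum_graph]

lemma maximumMatchings_graph_not_covers :
    {M | M ∈ MaximumMatchings (graph T) ∧ ¬ Covers M (Sum.inr 0)} = assemble '' freeChoices T := by
  ext M
  rw [Set.mem_ofPred_eq, maximumMatchings_graph]
  constructor
  · rintro ⟨⟨p, hp | hp, rfl⟩, hcov⟩
    · obtain ⟨heb, hec, -⟩ := mem_choices_iff.1 (Or.inl hp)
      exact absurd ((covers_inr_zero_assemble heb hec _).2 hp.1) hcov
    · exact ⟨p, hp, rfl⟩
  · rintro ⟨p, hp, rfl⟩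
    obtain ⟨heb, hec, hN, -⟩ := mem_choices_iff.1 (Or.inr hp)
    refine ⟨⟨p, Or.inr hp, rfl⟩, fun hcov => ?_⟩
    have hp' : p ∈ coveringChoices T := ⟨(covers_inr_zero_assemble heb hec _).1 hcov, hec, hN⟩
    exact Set.disjoint_left.1 disjoint_coveringChoices_freeChoices hp' hp

lemma ncard_cEdges : (cEdges T).ncard = 3 := by
  rw [cEdges, Set.ncard_insert_of_notMem (by simp [e34, e45, e46]),
    Set.ncard_pair (by simp [e45, e46])]

lemma ncard_coveringChoices : (coveringChoices T).ncard = 3 * T.m := by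
  rw [coveringChoices, Set.ncard_prod, Set.ncard_prod, Set.ncard_singleton, ncard_cEdges, one_mul,
    RGraph.m, mm]

lemma ncard_freeChoices (hA : TypeA T.G T.root) : (freeChoices T).ncard = 5 * T.m + 3 * T.m0 := by
  rw [freeChoices, Set.ncard_union_eq, Set.ncard_union_eq, Set.ncard_prod, Set.ncard_prod,
    Set.ncard_prod, Set.ncard_prod, Set.ncard_prod, Set.ncard_prod, Set.ncard_singleton,
    Set.ncard_singleton, Set.ncard_singleton, ncard_cEdges, Set.ncard_pair (by simp [e45, e46]),
    RGraph.m0_eq_ncard hA, RGraph.m, mm]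
  · ring
  · simp [e12, e13]
  · simp only [Set.disjoint_union_left, Set.disjoint_prod]
    simp [e12, e13, e1r]

theorem typeA_root : TypeA (consC T).G (consC T).root := by
  obtain ⟨N, hN⟩ := maximumMatchings_nonempty (G := T.G)
  have hp : (e12 T, e34 T, N) ∈ freeChoices T := Or.inl (Or.inl ⟨rfl, Or.inl rfl, hN⟩)
  obtain ⟨hM, hcov⟩ := maximumMatchings_graph_not_covers.symm.subset ⟨_, hp, rfl⟩
  exact ⟨_, hM, hcov⟩

theorem m_eq (hA : TypeA T.G T.root) : (consC T).m = 8 * T.m + 3 * T.m0 := by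
  have h : (consC T).m = (assemble '' (coveringChoices T ∪ freeChoices T)).ncard := by
    rw [← maximumMatchings_graph]
    rfl
  rw [h, injOn_assemble_choices.ncard_image,
    Set.ncard_union_eq disjoint_coveringChoices_freeChoices, ncard_coveringChoices,
    ncard_freeChoices hA]
  ring

theorem m0_eq (hA : TypeA T.G T.root) : (consC T).m0 = 5 * T.m + 3 * T.m0 := by
  have h : (consC T).m0 = (assemble '' freeChoices T).ncard := by
    rw [← maximumMatchings_graph_not_covers]
    exact mm_induce_ne_of_typeA typeA_root
  rw [h, (injOn_assemble_choices.mono Set.subset_union_right).ncard_image, ncard_freeChoices hA]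

end consC

lemma rL_typeA : TypeA rL.G rL.root :=
  ⟨∅, by rw [maximumMatchings_of_forall_not_adj fun _ _ h => h]; rfl, fun ⟨_, he, _⟩ => he⟩

lemma rL_m : rL.m = 1 := mm_of_forall_not_adj fun _ _ h => h

lemma rL_m0 : rL.m0 = 1 := mm_of_forall_not_adj fun _ _ h => h

abbrev forkGraph : SimpleGraph (Fin 4) := rF.G

lemma forkGraph_edgeSet : forkGraph.edgeSet = {s(0, 1), s(1, 2), s(1, 3)} := by
  ext e
  induction e with
  | _ a b =>
    rw [SimpleGraph.mem_edgeSet]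
    simp only [forkGraph, rF, SimpleGraph.fromRel_adj]
    simp only [Set.mem_insert_iff, Set.mem_singleton_iff, Sym2.eq_iff]
    fin_cases a <;> fin_cases b <;> simp

lemma forkGraph_center : ∀ e ∈ forkGraph.edgeSet, (1 : Fin 4) ∈ e := by
  simp [forkGraph_edgeSet]

lemma forkGraph_edgeSet_nonempty : forkGraph.edgeSet.Nonempty := by
  simp [forkGraph_edgeSet]

lemma rF_typeA : TypeA rF.G rF.root := by
  show TypeA forkGraph 0
  refine ⟨{s(1, 2)}, ?_, ?_⟩
  · rw [maximumMatchings_of_forall_mem forkGraph_center forkGraph_edgeSet_nonempty,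
      forkGraph_edgeSet]
    exact ⟨s(1, 2), by simp, rfl⟩
  · rintro ⟨e, he, h0⟩
    simp_all

lemma rF_m : rF.m = 3 := by
  show mm forkGraph = 3
  rw [mm_of_forall_mem forkGraph_center forkGraph_edgeSet_nonempty, forkGraph_edgeSet,
    Set.ncard_insert_of_notMem (by simp), Set.ncard_pair (by simp)]

lemma rF_m0 : rF.m0 = 2 := by
  have h : {e | e ∈ forkGraph.edgeSet ∧ (0 : Fin 4) ∉ e} = {s(1, 2), s(1, 3)} := by
    ext e
    simp only [forkGraph_edgeSet, Set.mem_ofPred_eq, Set.mem_insert_iff, Set.mem_singleton_iff]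
    constructor
    · rintro ⟨rfl | rfl | rfl, h0⟩ <;> simp_all
    · rintro (rfl | rfl) <;> simp
  show mm (forkGraph.induce {v | v ≠ 0}) = 2
  rw [mm_induce_ne_of_typeA (G := forkGraph) (r := 0) rF_typeA,
    ncard_not_covers_of_forall_mem forkGraph_center forkGraph_edgeSet_nonempty, h,
    Set.ncard_pair (by simp)]

section Iterate

variable (T : RGraph) [Finite T.V]

lemma finite_iterate_consC (k : ℕ) : Finite (consC^[k] T).V := by
  induction k with
  | zero => assumption
  | succ k ih => rw [Function.iterate_succ_apply']; infer_instance

lemma typeA_iterate_consC (hA : TypeA T.G T.root) :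
    ∀ k, TypeA (consC^[k] T).G (consC^[k] T).root
  | 0 => hA
  | k + 1 => by
    have := finite_iterate_consC T k
    rw [Function.iterate_succ_apply']
    exact consC.typeA_root

lemma iterate_consC_eq (hA : TypeA T.G T.root) {a b : ℕ → ℤ} (ha₀ : T.m = a 0)
    (hb₀ : T.m0 = b 0) (ha : ∀ k, a (k + 1) = 8 * a k + 3 * b k)
    (hb : ∀ k, b (k + 1) = 5 * a k + 3 * b k) (k : ℕ) :
    (consC^[k] T).m = a k ∧ (consC^[k] T).m0 = b k := by
  induction k with
  | zero => exact ⟨ha₀, hb₀⟩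
  | succ k ih =>
    have := finite_iterate_consC T k
    have hAk := typeA_iterate_consC T hA k
    rw [Function.iterate_succ_apply', consC.m_eq hAk, consC.m0_eq hAk, ha, hb, ← ih.1, ← ih.2]
    push_cast
    exact ⟨rfl, rfl⟩

end Iterate

/-- if `(T,r)` is a rooted tree of type A, then `(CT,s)` is of type A with
`m(CT) = 8m(T) + 3m₀(T)` and `m₀(CT) = 5m(T) + 3m₀(T)`; consequently
`m(C^kL) = G_{k+1}`, `m₀(C^kL) = G_{k+1} − 3G_k`, `m(C^kF) = 3G_{k+1} − 3G_k` and
`m₀(C^kF) = 2G_{k+1} − G_k`. -/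
theorem stmt_10 :
    (∀ T : RGraph, Finite T.V → T.G.IsTree → TypeA T.G T.root →
      TypeA (consC T).G (consC T).root ∧
      (consC T).m = 8 * T.m + 3 * T.m0 ∧
      (consC T).m0 = 5 * T.m + 3 * T.m0) ∧
    (∀ k : ℕ,
      ((consC^[k] rL).m : ℤ) = Gseq (k + 1) ∧
      ((consC^[k] rL).m0 : ℤ) = Gseq (k + 1) - 3 * Gseq k ∧
      ((consC^[k] rF).m : ℤ) = 3 * Gseq (k + 1) - 3 * Gseq k ∧
      ((consC^[k] rF).m0 : ℤ) = 2 * Gseq (k + 1) - Gseq k) := by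
  refine ⟨fun T _ _ hA => ⟨consC.typeA_root, consC.m_eq hA, consC.m0_eq hA⟩, fun k => ?_⟩
  have : Finite rL.V := inferInstanceAs (Finite PUnit)
  have : Finite rF.V := inferInstanceAs (Finite (Fin 4))
  obtain ⟨hL, hL₀⟩ := iterate_consC_eq rL rL_typeA (a := fun j => Gseq (j + 1))
    (b := fun j => Gseq (j + 1) - 3 * Gseq j) (by simp [rL_m, Gseq]) (by simp [rL_m0, Gseq])
    (fun j => by simp only [Gseq]; ring) (fun j => by simp only [Gseq]; ring) k
  obtain ⟨hF, hF₀⟩ := iterate_consC_eq rF rF_typeA (a := fun j => 3 * Gseq (j + 1) - 3 * Gseq j)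
    (b := fun j => 2 * Gseq (j + 1) - Gseq j) (by simp [rF_m, Gseq]) (by simp [rF_m0, Gseq])
    (fun j => by simp only [Gseq]; ring) (fun j => by simp only [Gseq]; ring) k
  exact ⟨hL, hL₀, hF, hF₀⟩

end PaperMM
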